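/- Let H be an associative unital k-algebra with algebra homomorphisms Δ : H → H⊗H and ε : H → k satisfying the counit laws (but Δ not necessarily coassociative). Suppose the right Galois map β : g⊗h ↦ gh₍₁₎⊗h₍₂₎ has an almost right H-colinear inverse and the left Galois map γ : g⊗h ↦ g₍₁₎⊗g₍₂₎h has an almost left H-colinear inverse. Then H is a Hopf coquasigroup; explicitly, the linear map S : H → H defined by Sh = (id⊗ε)(β⁻¹(1⊗h)) satisfies, for all h ∈ H: (Sh₍₁₎)h₍₂₎₍₁₎ ⊗ h₍₂₎₍₂₎ = 1⊗h = h₍₁₎S(h₍₂₎₍₁₎) ⊗ h₍₂₎₍₂₎ and h₍₁₎₍₁₎ ⊗ h₍₁₎₍₂₎Sh₍₂₎ = h⊗1 = h₍₁₎₍₁₎ ⊗ (Sh₍₁₎₍₂₎)h₍₂₎. -/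

import Mathlib

/-!
Almost right colinearity gives `β⁻¹(1 ⊗ h) = S h₍₁₎ ⊗ h₍₂₎`. By associativity `β` commutes with
left multiplication on the first tensor factor, hence so does `β⁻¹`, and therefore
`β⁻¹(g ⊗ h) = g S h₍₁₎ ⊗ h₍₂₎`. Evaluating `β β⁻¹ = id` and `β⁻¹ β = id` at `1 ⊗ h` yields the
first two identities. Mirror-symmetrically, `γ⁻¹(g ⊗ h) = g₍₁₎ ⊗ (S' g₍₂₎) h` with
`S' g = (ε ⊗ id)(γ⁻¹(g ⊗ 1))`, and `γ γ⁻¹ = id = γ⁻¹ γ` at `h ⊗ 1` yield the last two identities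
for `S'`. Finally `S' = S`, because applying `id ⊗ ε` to the first identity shows
`(S h₍₁₎) h₍₂₎ = ε(h) 1`.
-/

open TensorProduct

noncomputable section

/-- The componentwise product on `H ⊗[k] H` induced by a bilinear multiplication on `H`:
`(a ⊗ b) * (c ⊗ d) = a c ⊗ b d`. -/
def tmul2 (k : Type*) [Field k] (H : Type*) [AddCommGroup H] [Module k H]
    (mul : H →ₗ[k] H →ₗ[k] H) :
    H ⊗[k] H →ₗ[k] H ⊗[k] H →ₗ[k] H ⊗[k] H :=
  TensorProduct.curry
    ((TensorProduct.map (TensorProduct.lift mul) (TensorProduct.lift mul)).comp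
      (TensorProduct.tensorTensorTensorComm k H H H H).toLinearMap)

/-- The common setup: a (not necessarily associative) unital algebra `H` with a
(not necessarily coassociative) counital coalgebra structure, such that the coproduct
and the counit are multiplicative and unital. -/
structure BialgQ (k : Type*) [Field k] (H : Type*) [AddCommGroup H] [Module k H] where
  /-- the (bilinear, not necessarily associative) multiplication -/
  mul : H →ₗ[k] H →ₗ[k] H
  /-- the unit element -/
  one : H
  /-- the (not necessarily coassociative) comultiplication -/
  comul : H →ₗ[k] H ⊗[k] H
  /-- the counit -/
  counit : H →ₗ[k] k
  one_mul : ∀ h, mul one h = h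
  mul_one : ∀ h, mul h one = h
  /-- counit law `(ε ⊗ id) ∘ Δ = id` -/
  counit_comul : ∀ h,
    TensorProduct.lid k H (TensorProduct.map counit LinearMap.id (comul h)) = h
  /-- counit law `(id ⊗ ε) ∘ Δ = id` -/
  comul_counit : ∀ h,
    TensorProduct.rid k H (TensorProduct.map LinearMap.id counit (comul h)) = h
  /-- `Δ` is multiplicative -/
  comul_mul : ∀ g h, comul (mul g h) = tmul2 k H mul (comul g) (comul h)
  /-- `Δ` is unital -/
  comul_one : comul one = one ⊗ₜ[k] one
  /-- `ε` is multiplicative -/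
  counit_mul : ∀ g h, counit (mul g h) = counit g * counit h
  /-- `ε` is unital -/
  counit_one : counit one = 1

namespace BialgQ

variable {k : Type*} [Field k] {H : Type*} [AddCommGroup H] [Module k H] (D : BialgQ k H)

/-- The multiplication as a linear map on the tensor product. -/
def mulMap : H ⊗[k] H →ₗ[k] H := TensorProduct.lift D.mul

/-- The right Galois map `β : g ⊗ h ↦ g h₍₁₎ ⊗ h₍₂₎`. -/
def rGalois : H ⊗[k] H →ₗ[k] H ⊗[k] H :=
  (TensorProduct.map D.mulMap LinearMap.id).comp
    (((TensorProduct.assoc k H H H).symm.toLinearMap).comp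
      (TensorProduct.map LinearMap.id D.comul))

/-- The left Galois map `γ : g ⊗ h ↦ g₍₁₎ ⊗ g₍₂₎ h`. -/
def lGalois : H ⊗[k] H →ₗ[k] H ⊗[k] H :=
  (TensorProduct.map LinearMap.id D.mulMap).comp
    (((TensorProduct.assoc k H H H).toLinearMap).comp
      (TensorProduct.map D.comul LinearMap.id))

/-- `φ` is almost left `H`-linear: `φ(g ⊗ h) = (g ⊗ 1) · φ(1 ⊗ h)`. -/
def AlmostLeftLinear (φ : H ⊗[k] H →ₗ[k] H ⊗[k] H) : Prop :=
  ∀ g h : H, φ (g ⊗ₜ[k] h) = tmul2 k H D.mul (g ⊗ₜ[k] D.one) (φ (D.one ⊗ₜ[k] h))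

/-- `φ` is almost right `H`-linear: `φ(g ⊗ h) = φ(g ⊗ 1) · (1 ⊗ h)`. -/
def AlmostRightLinear (φ : H ⊗[k] H →ₗ[k] H ⊗[k] H) : Prop :=
  ∀ g h : H, φ (g ⊗ₜ[k] h) = tmul2 k H D.mul (φ (g ⊗ₜ[k] D.one)) (D.one ⊗ₜ[k] h)

/-- `φ` is almost right `H`-colinear: `φ(g ⊗ h) = (id ⊗ ε)(φ(g ⊗ h₍₁₎)) ⊗ h₍₂₎`. -/
def AlmostRightColinear (φ : H ⊗[k] H →ₗ[k] H ⊗[k] H) : Prop :=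
  ∀ g h : H, φ (g ⊗ₜ[k] h) =
    TensorProduct.map
      ((TensorProduct.rid k H).toLinearMap.comp (TensorProduct.map LinearMap.id D.counit))
      LinearMap.id
      (TensorProduct.map φ LinearMap.id
        ((TensorProduct.assoc k H H H).symm (g ⊗ₜ[k] D.comul h)))

/-- `φ` is almost left `H`-colinear: `φ(g ⊗ h) = g₍₁₎ ⊗ (ε ⊗ id)(φ(g₍₂₎ ⊗ h))`. -/
def AlmostLeftColinear (φ : H ⊗[k] H →ₗ[k] H ⊗[k] H) : Prop :=
  ∀ g h : H, φ (g ⊗ₜ[k] h) =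
    TensorProduct.map LinearMap.id
      ((TensorProduct.lid k H).toLinearMap.comp (TensorProduct.map D.counit LinearMap.id))
      (TensorProduct.map LinearMap.id φ
        ((TensorProduct.assoc k H H H) (D.comul g ⊗ₜ[k] h)))

/-- The candidate inverse `g ⊗ h ↦ g S(h₍₁₎) ⊗ h₍₂₎` of the right Galois map, built
from a linear map `S : H → H`. -/
def betaInvOf (S : H →ₗ[k] H) : H ⊗[k] H →ₗ[k] H ⊗[k] H :=
  (TensorProduct.map (D.mulMap.comp (TensorProduct.map LinearMap.id S)) LinearMap.id).comp
    (((TensorProduct.assoc k H H H).symm.toLinearMap).comp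
      (TensorProduct.map LinearMap.id D.comul))

/-- The candidate inverse `g ⊗ h ↦ g₍₁₎ ⊗ (S g₍₂₎) h` of the left Galois map, built
from a linear map `S : H → H`. -/
def gammaInvOf (S : H →ₗ[k] H) : H ⊗[k] H →ₗ[k] H ⊗[k] H :=
  (TensorProduct.map LinearMap.id (D.mulMap.comp (TensorProduct.map S LinearMap.id))).comp
    (((TensorProduct.assoc k H H H).toLinearMap).comp
      (TensorProduct.map D.comul LinearMap.id))

/-- The antipode produced from an inverse `φ` of the right Galois map:
`S h = (id ⊗ ε)(φ(1 ⊗ h))`. -/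
def antipodeOf (φ : H ⊗[k] H →ₗ[k] H ⊗[k] H) : H →ₗ[k] H :=
  ((TensorProduct.rid k H).toLinearMap.comp
    ((TensorProduct.map LinearMap.id D.counit).comp
      (φ.comp (TensorProduct.mk k H H D.one))))

end BialgQ

/-- A Hopf quasigroup. -/
structure HopfQuasigroup (k : Type*) [Field k] (H : Type*) [AddCommGroup H] [Module k H]
    extends BialgQ k H where
  /-- `Δ` is coassociative -/
  coassoc : ∀ h, TensorProduct.assoc k H H H
      (TensorProduct.map comul LinearMap.id (comul h)) =
    TensorProduct.map LinearMap.id comul (comul h)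
  /-- the antipode -/
  S : H →ₗ[k] H
  /-- `(S h₍₁₎)(h₍₂₎ g) = ε(h) g` -/
  antipode₁ : ∀ h g, TensorProduct.lift mul
      (TensorProduct.map S (TensorProduct.lift mul)
        (TensorProduct.assoc k H H H (comul h ⊗ₜ[k] g))) = counit h • g
  /-- `h₍₁₎((S h₍₂₎) g) = ε(h) g` -/
  antipode₂ : ∀ h g, TensorProduct.lift mul
      (TensorProduct.map LinearMap.id
        ((TensorProduct.lift mul).comp (TensorProduct.map S LinearMap.id))
        (TensorProduct.assoc k H H H (comul h ⊗ₜ[k] g))) = counit h • g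
  /-- `(g h₍₁₎) S h₍₂₎ = ε(h) g` -/
  antipode₃ : ∀ g h, TensorProduct.lift mul
      (TensorProduct.map (TensorProduct.lift mul) S
        ((TensorProduct.assoc k H H H).symm (g ⊗ₜ[k] comul h))) = counit h • g
  /-- `(g S h₍₁₎) h₍₂₎ = ε(h) g` -/
  antipode₄ : ∀ g h, TensorProduct.lift mul
      (TensorProduct.map ((TensorProduct.lift mul).comp (TensorProduct.map LinearMap.id S))
        LinearMap.id
        ((TensorProduct.assoc k H H H).symm (g ⊗ₜ[k] comul h))) = counit h • g

/-- A Hopf coquasigroup. -/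
structure HopfCoquasigroup (k : Type*) [Field k] (H : Type*) [AddCommGroup H] [Module k H]
    extends BialgQ k H where
  /-- the multiplication is associative -/
  mul_assoc : ∀ g h l, mul (mul g h) l = mul g (mul h l)
  /-- the antipode -/
  S : H →ₗ[k] H
  /-- `(S h₍₁₎) h₍₂₎₍₁₎ ⊗ h₍₂₎₍₂₎ = 1 ⊗ h` -/
  coantipode₁ : ∀ h,
    TensorProduct.map ((TensorProduct.lift mul).comp (TensorProduct.map S LinearMap.id))
      LinearMap.id
      ((TensorProduct.assoc k H H H).symm
        (TensorProduct.map LinearMap.id comul (comul h))) = one ⊗ₜ[k] h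
  /-- `h₍₁₎ S(h₍₂₎₍₁₎) ⊗ h₍₂₎₍₂₎ = 1 ⊗ h` -/
  coantipode₂ : ∀ h,
    TensorProduct.map ((TensorProduct.lift mul).comp (TensorProduct.map LinearMap.id S))
      LinearMap.id
      ((TensorProduct.assoc k H H H).symm
        (TensorProduct.map LinearMap.id comul (comul h))) = one ⊗ₜ[k] h
  /-- `h₍₁₎₍₁₎ ⊗ h₍₁₎₍₂₎ S h₍₂₎ = h ⊗ 1` -/
  coantipode₃ : ∀ h,
    TensorProduct.map LinearMap.id
      ((TensorProduct.lift mul).comp (TensorProduct.map LinearMap.id S))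
      (TensorProduct.assoc k H H H
        (TensorProduct.map comul LinearMap.id (comul h))) = h ⊗ₜ[k] one
  /-- `h₍₁₎₍₁₎ ⊗ (S h₍₁₎₍₂₎) h₍₂₎ = h ⊗ 1` -/
  coantipode₄ : ∀ h,
    TensorProduct.map LinearMap.id
      ((TensorProduct.lift mul).comp (TensorProduct.map S LinearMap.id))
      (TensorProduct.assoc k H H H
        (TensorProduct.map comul LinearMap.id (comul h))) = h ⊗ₜ[k] one

namespace HopfQuasigroup

variable {k : Type*} [Field k] {H : Type*} [AddCommGroup H] [Module k H]
  (Q : HopfQuasigroup k H)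

/-- `M` is a right `H`-Hopf module over the Hopf quasigroup `Q`, with (bilinear, unital)
action `act` and (coassociative, counital) coaction `ρ`, satisfying
`(m·h₍₁₎)·Sh₍₂₎ = ε(h) m = (m·Sh₍₁₎)·h₍₂₎` and `ρ(m·h) = m₍₀₎·h₍₁₎ ⊗ m₍₁₎h₍₂₎`. -/
def IsHopfModule {M : Type*} [AddCommGroup M] [Module k M]
    (act : M ⊗[k] H →ₗ[k] M) (ρ : M →ₗ[k] M ⊗[k] H) : Prop :=
  (∀ m, act (m ⊗ₜ[k] Q.one) = m) ∧
  (∀ m, TensorProduct.assoc k M H H (TensorProduct.map ρ LinearMap.id (ρ m)) =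
      TensorProduct.map LinearMap.id Q.comul (ρ m)) ∧
  (∀ m, TensorProduct.rid k M (TensorProduct.map LinearMap.id Q.counit (ρ m)) = m) ∧
  (∀ m h, act (TensorProduct.map act Q.S
      ((TensorProduct.assoc k M H H).symm (m ⊗ₜ[k] Q.comul h))) = Q.counit h • m) ∧
  (∀ m h, act (TensorProduct.map (act.comp (TensorProduct.map LinearMap.id Q.S)) LinearMap.id
      ((TensorProduct.assoc k M H H).symm (m ⊗ₜ[k] Q.comul h))) = Q.counit h • m) ∧
  (∀ m h, ρ (act (m ⊗ₜ[k] h)) =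
      TensorProduct.map act (TensorProduct.lift Q.mul)
        (TensorProduct.tensorTensorTensorComm k M H H H (ρ m ⊗ₜ[k] Q.comul h)))

/-- `m ↦ (m₍₀₎ · S m₍₁₎) ⊗ m₍₂₎`. -/
def coinvPart {M : Type*} [AddCommGroup M] [Module k M]
    (act : M ⊗[k] H →ₗ[k] M) (ρ : M →ₗ[k] M ⊗[k] H) : M →ₗ[k] M ⊗[k] H :=
  (TensorProduct.map (act.comp (TensorProduct.map LinearMap.id Q.S)) LinearMap.id).comp
    ((TensorProduct.map ρ LinearMap.id).comp ρ)

/-- The induced action `m ⊳ h = (m₍₀₎ · S m₍₁₎) · (m₍₂₎ h)` of a right Hopf module. -/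
def inducedAct {M : Type*} [AddCommGroup M] [Module k M]
    (act : M ⊗[k] H →ₗ[k] M) (ρ : M →ₗ[k] M ⊗[k] H) : M ⊗[k] H →ₗ[k] M :=
  act.comp ((TensorProduct.map LinearMap.id (TensorProduct.lift Q.mul)).comp
    (((TensorProduct.assoc k M H H).toLinearMap).comp
      (TensorProduct.map (Q.coinvPart act ρ) LinearMap.id)))

/-- The free action `(m ⊗ h) · g = m ⊗ h g` on `M ⊗ H`. -/
def freeAct (M : Type*) [AddCommGroup M] [Module k M] :
    (M ⊗[k] H) ⊗[k] H →ₗ[k] M ⊗[k] H :=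
  (TensorProduct.map LinearMap.id (TensorProduct.lift Q.mul)).comp
    (TensorProduct.assoc k M H H).toLinearMap

/-- The coaction `id ⊗ Δ : m ⊗ h ↦ m ⊗ h₍₁₎ ⊗ h₍₂₎` on `M ⊗ H`. -/
def freeCoact (M : Type*) [AddCommGroup M] [Module k M] :
    M ⊗[k] H →ₗ[k] (M ⊗[k] H) ⊗[k] H :=
  ((TensorProduct.assoc k M H H).symm.toLinearMap).comp
    (TensorProduct.map LinearMap.id Q.comul)

/-- The diagonal action `(m ⊗ h) · g = m · g₍₁₎ ⊗ h g₍₂₎` on `M ⊗ H`. -/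
def diagAct {M : Type*} [AddCommGroup M] [Module k M]
    (act : M ⊗[k] H →ₗ[k] M) : (M ⊗[k] H) ⊗[k] H →ₗ[k] M ⊗[k] H :=
  (TensorProduct.map act (TensorProduct.lift Q.mul)).comp
    (((TensorProduct.tensorTensorTensorComm k M H H H).toLinearMap).comp
      (TensorProduct.map LinearMap.id Q.comul))

/-- The coinvariants `M^{coH} = {m | ρ(m) = m ⊗ 1}` of a right `H`-comodule. -/
def coinvariants {M : Type*} [AddCommGroup M] [Module k M]
    (ρ : M →ₗ[k] M ⊗[k] H) : Submodule k M :=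
  LinearMap.ker (ρ - (TensorProduct.mk k M H).flip Q.one)

end HopfQuasigroup

namespace HopfCoquasigroup

variable {k : Type*} [Field k] {H : Type*} [AddCommGroup H] [Module k H]
  (Q : HopfCoquasigroup k H)

/-- `M` is a right `H`-Hopf module over the Hopf coquasigroup `Q`, with (bilinear,
associative, unital) action `act` and (counital, not necessarily coassociative)
coaction `ρ`, satisfying `m₍₀₎₍₀₎ ⊗ m₍₀₎₍₁₎ S m₍₁₎ = m ⊗ 1 = m₍₀₎₍₀₎ ⊗ (S m₍₀₎₍₁₎) m₍₁₎`
and `ρ(m·h) = m₍₀₎·h₍₁₎ ⊗ m₍₁₎h₍₂₎`. -/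
def IsHopfModule {M : Type*} [AddCommGroup M] [Module k M]
    (act : M ⊗[k] H →ₗ[k] M) (ρ : M →ₗ[k] M ⊗[k] H) : Prop :=
  (∀ m, act (m ⊗ₜ[k] Q.one) = m) ∧
  (∀ m g h, act (act (m ⊗ₜ[k] g) ⊗ₜ[k] h) = act (m ⊗ₜ[k] Q.mul g h)) ∧
  (∀ m, TensorProduct.rid k M (TensorProduct.map LinearMap.id Q.counit (ρ m)) = m) ∧
  (∀ m, TensorProduct.map LinearMap.id
      ((TensorProduct.lift Q.mul).comp (TensorProduct.map LinearMap.id Q.S))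
      (TensorProduct.assoc k M H H (TensorProduct.map ρ LinearMap.id (ρ m)))
      = m ⊗ₜ[k] Q.one) ∧
  (∀ m, TensorProduct.map LinearMap.id
      ((TensorProduct.lift Q.mul).comp (TensorProduct.map Q.S LinearMap.id))
      (TensorProduct.assoc k M H H (TensorProduct.map ρ LinearMap.id (ρ m)))
      = m ⊗ₜ[k] Q.one) ∧
  (∀ m h, ρ (act (m ⊗ₜ[k] h)) =
      TensorProduct.map act (TensorProduct.lift Q.mul)
        (TensorProduct.tensorTensorTensorComm k M H H H (ρ m ⊗ₜ[k] Q.comul h)))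

/-- The induced coaction `λ(m) = ((m₍₀₎₍₀₎ · S m₍₀₎₍₁₎) · m₍₁₎₍₁₎) ⊗ m₍₁₎₍₂₎`. -/
def inducedCoact {M : Type*} [AddCommGroup M] [Module k M]
    (act : M ⊗[k] H →ₗ[k] M) (ρ : M →ₗ[k] M ⊗[k] H) : M →ₗ[k] M ⊗[k] H :=
  (TensorProduct.map act LinearMap.id).comp
    (((TensorProduct.assoc k M H H).symm.toLinearMap).comp
      ((TensorProduct.map (act.comp (TensorProduct.map LinearMap.id Q.S)) LinearMap.id).comp
        ((TensorProduct.map ρ Q.comul).comp ρ)))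

end HopfCoquasigroup

namespace BialgQ

variable {k : Type*} [Field k] {H : Type*} [AddCommGroup H] [Module k H] (D : BialgQ k H)

def lAntipodeOf (φ : H ⊗[k] H →ₗ[k] H ⊗[k] H) : H →ₗ[k] H :=
  (TensorProduct.lid k H).toLinearMap ∘ₗ map D.counit LinearMap.id ∘ₗ φ ∘ₗ
    (TensorProduct.mk k H H).flip D.one

lemma mul_one_eq_id : D.mul D.one = LinearMap.id :=
  LinearMap.ext D.one_mul

lemma mul_flip_one_eq_id : D.mul.flip D.one = LinearMap.id :=
  LinearMap.ext D.mul_one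

lemma mul_mul_eq_comp (massoc : ∀ g h l, D.mul (D.mul g h) l = D.mul g (D.mul h l))
    (g h : H) : D.mul (D.mul g h) = D.mul g ∘ₗ D.mul h :=
  LinearMap.ext (massoc g h)

lemma mul_flip_mul_eq_comp (massoc : ∀ g h l, D.mul (D.mul g h) l = D.mul g (D.mul h l))
    (g h : H) : D.mul.flip (D.mul g h) = D.mul.flip h ∘ₗ D.mul.flip g :=
  LinearMap.ext fun l => (massoc l g h).symm

lemma map_lift_mul_assoc_symm_tmul (f g : H →ₗ[k] H) (a : H) (y : H ⊗[k] H) :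
    map (lift D.mul ∘ₗ map f g) LinearMap.id ((TensorProduct.assoc k H H H).symm (a ⊗ₜ y)) =
      map (D.mul (f a) ∘ₗ g) LinearMap.id y := by
  induction y using TensorProduct.induction_on with
  | zero => simp
  | tmul c d => simp
  | add u v hu hv => simp only [tmul_add, map_add, hu, hv]

lemma map_lift_mul_assoc_tmul (f g : H →ₗ[k] H) (y : H ⊗[k] H) (b : H) :
    map LinearMap.id (lift D.mul ∘ₗ map f g) (TensorProduct.assoc k H H H (y ⊗ₜ b)) =
      map LinearMap.id (D.mul.flip (g b) ∘ₗ f) y := by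
  induction y using TensorProduct.induction_on with
  | zero => simp
  | tmul c d => simp
  | add u v hu hv => simp only [add_tmul, map_add, hu, hv]

lemma rGalois_tmul (g h : H) :
    D.rGalois (g ⊗ₜ h) = map (D.mul g) LinearMap.id (D.comul h) := by
  simpa [rGalois, mulMap] using
    D.map_lift_mul_assoc_symm_tmul LinearMap.id LinearMap.id g (D.comul h)

lemma lGalois_tmul (g h : H) :
    D.lGalois (g ⊗ₜ h) = map LinearMap.id (D.mul.flip h) (D.comul g) := by
  simpa [lGalois, mulMap] using
    D.map_lift_mul_assoc_tmul LinearMap.id LinearMap.id (D.comul g) h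

lemma betaInvOf_tmul (S : H →ₗ[k] H) (g h : H) :
    D.betaInvOf S (g ⊗ₜ h) = map (D.mul g ∘ₗ S) LinearMap.id (D.comul h) := by
  simpa [betaInvOf, mulMap] using D.map_lift_mul_assoc_symm_tmul LinearMap.id S g (D.comul h)

lemma gammaInvOf_tmul (S : H →ₗ[k] H) (g h : H) :
    D.gammaInvOf S (g ⊗ₜ h) = map LinearMap.id (D.mul.flip h ∘ₗ S) (D.comul g) := by
  simpa [gammaInvOf, mulMap] using D.map_lift_mul_assoc_tmul S LinearMap.id (D.comul g) h

lemma rGalois_one_tmul (h : H) : D.rGalois (D.one ⊗ₜ h) = D.comul h := by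
  rw [rGalois_tmul, mul_one_eq_id, map_id, LinearMap.id_apply]

lemma lGalois_tmul_one (g : H) : D.lGalois (g ⊗ₜ D.one) = D.comul g := by
  rw [lGalois_tmul, mul_flip_one_eq_id, map_id, LinearMap.id_apply]

lemma rGalois_map (S : H →ₗ[k] H) (x : H ⊗[k] H) :
    D.rGalois (map S LinearMap.id x) =
      map (lift D.mul ∘ₗ map S LinearMap.id) LinearMap.id
        ((TensorProduct.assoc k H H H).symm (map LinearMap.id D.comul x)) := by
  induction x using TensorProduct.induction_on with
  | zero => simp
  | tmul a b =>
    rw [map_tmul, map_tmul, rGalois_tmul, map_lift_mul_assoc_symm_tmul, LinearMap.comp_id]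
    rfl
  | add u v hu hv => simp only [map_add, hu, hv]

lemma lGalois_map (S : H →ₗ[k] H) (x : H ⊗[k] H) :
    D.lGalois (map LinearMap.id S x) =
      map LinearMap.id (lift D.mul ∘ₗ map LinearMap.id S)
        (TensorProduct.assoc k H H H (map D.comul LinearMap.id x)) := by
  induction x using TensorProduct.induction_on with
  | zero => simp
  | tmul a b =>
    rw [map_tmul, map_tmul, lGalois_tmul, map_lift_mul_assoc_tmul, LinearMap.comp_id]
    rfl
  | add u v hu hv => simp only [map_add, hu, hv]


lemma rGalois_comp_map_mul (massoc : ∀ g h l, D.mul (D.mul g h) l = D.mul g (D.mul h l))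
    (g : H) :
    D.rGalois ∘ₗ map (D.mul g) LinearMap.id = map (D.mul g) LinearMap.id ∘ₗ D.rGalois := by
  refine TensorProduct.ext' fun a b => ?_
  simp only [LinearMap.comp_apply, map_tmul, LinearMap.id_apply, rGalois_tmul, map_map,
    D.mul_mul_eq_comp massoc, LinearMap.comp_id]

lemma lGalois_comp_map_mul_flip (massoc : ∀ g h l, D.mul (D.mul g h) l = D.mul g (D.mul h l))
    (h : H) :
    D.lGalois ∘ₗ map LinearMap.id (D.mul.flip h) =
      map LinearMap.id (D.mul.flip h) ∘ₗ D.lGalois := by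
  refine TensorProduct.ext' fun a b => ?_
  simp only [LinearMap.comp_apply, map_tmul, LinearMap.id_apply, lGalois_tmul, map_map,
    LinearMap.flip_apply, D.mul_flip_mul_eq_comp massoc, LinearMap.comp_id]

lemma apply_tmul_of_rGalois_inverse
    (massoc : ∀ g h l, D.mul (D.mul g h) l = D.mul g (D.mul h l))
    {φ : H ⊗[k] H →ₗ[k] H ⊗[k] H} (hl : φ ∘ₗ D.rGalois = LinearMap.id)
    (hr : D.rGalois ∘ₗ φ = LinearMap.id) (g h : H) :
    φ (g ⊗ₜ h) = map (D.mul g) LinearMap.id (φ (D.one ⊗ₜ h)) := by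
  have hcomm : Commute (⟨D.rGalois, φ, hr, hl⟩ : (Module.End k (H ⊗[k] H))ˣ)⁻¹.val
      (map (D.mul g) LinearMap.id) :=
    Commute.units_inv_left (D.rGalois_comp_map_mul massoc g)
  simpa [D.mul_one] using LinearMap.congr_fun hcomm.eq (D.one ⊗ₜ h)

lemma apply_tmul_of_lGalois_inverse
    (massoc : ∀ g h l, D.mul (D.mul g h) l = D.mul g (D.mul h l))
    {φ : H ⊗[k] H →ₗ[k] H ⊗[k] H} (hl : φ ∘ₗ D.lGalois = LinearMap.id)
    (hr : D.lGalois ∘ₗ φ = LinearMap.id) (g h : H) :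
    φ (g ⊗ₜ h) = map LinearMap.id (D.mul.flip h) (φ (g ⊗ₜ D.one)) := by
  have hcomm : Commute (⟨D.lGalois, φ, hr, hl⟩ : (Module.End k (H ⊗[k] H))ˣ)⁻¹.val
      (map LinearMap.id (D.mul.flip h)) :=
    Commute.units_inv_left (D.lGalois_comp_map_mul_flip massoc h)
  simpa [D.one_mul] using LinearMap.congr_fun hcomm.eq (g ⊗ₜ D.one)

lemma apply_one_tmul_of_almostRightColinear {φ : H ⊗[k] H →ₗ[k] H ⊗[k] H}
    (hφ : D.AlmostRightColinear φ) (h : H) :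
    φ (D.one ⊗ₜ h) = map (D.antipodeOf φ) LinearMap.id (D.comul h) := by
  rw [hφ]
  induction D.comul h using TensorProduct.induction_on with
  | zero => simp
  | tmul a b => simp [antipodeOf]
  | add u v hu hv => simp only [tmul_add, map_add, hu, hv]

lemma apply_tmul_one_of_almostLeftColinear {φ : H ⊗[k] H →ₗ[k] H ⊗[k] H}
    (hφ : D.AlmostLeftColinear φ) (g : H) :
    φ (g ⊗ₜ D.one) = map LinearMap.id (D.lAntipodeOf φ) (D.comul g) := by
  rw [hφ]
  induction D.comul g using TensorProduct.induction_on with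
  | zero => simp
  | tmul a b => simp [lAntipodeOf]
  | add u v hu hv => simp only [add_tmul, map_add, hu, hv]

lemma eq_betaInvOf_antipodeOf (massoc : ∀ g h l, D.mul (D.mul g h) l = D.mul g (D.mul h l))
    {φ : H ⊗[k] H →ₗ[k] H ⊗[k] H} (hl : φ ∘ₗ D.rGalois = LinearMap.id)
    (hr : D.rGalois ∘ₗ φ = LinearMap.id) (hφ : D.AlmostRightColinear φ) :
    φ = D.betaInvOf (D.antipodeOf φ) := by
  refine TensorProduct.ext' fun g h => ?_
  rw [D.apply_tmul_of_rGalois_inverse massoc hl hr, D.apply_one_tmul_of_almostRightColinear hφ,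
    betaInvOf_tmul, map_map, LinearMap.comp_id]

lemma eq_gammaInvOf_lAntipodeOf (massoc : ∀ g h l, D.mul (D.mul g h) l = D.mul g (D.mul h l))
    {φ : H ⊗[k] H →ₗ[k] H ⊗[k] H} (hl : φ ∘ₗ D.lGalois = LinearMap.id)
    (hr : D.lGalois ∘ₗ φ = LinearMap.id) (hφ : D.AlmostLeftColinear φ) :
    φ = D.gammaInvOf (D.lAntipodeOf φ) := by
  refine TensorProduct.ext' fun g h => ?_
  rw [D.apply_tmul_of_lGalois_inverse massoc hl hr, D.apply_tmul_one_of_almostLeftColinear hφ,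
    gammaInvOf_tmul, map_map, LinearMap.comp_id]

lemma rid_map_counit_map (f : H →ₗ[k] H) (y : H ⊗[k] H) :
    TensorProduct.rid k H (map LinearMap.id D.counit (map f LinearMap.id y)) =
      f (TensorProduct.rid k H (map LinearMap.id D.counit y)) := by
  induction y using TensorProduct.induction_on with
  | zero => simp
  | tmul a b => simp
  | add u v hu hv => simp only [map_add, hu, hv]

lemma lift_mul_map_mul_flip (massoc : ∀ g h l, D.mul (D.mul g h) l = D.mul g (D.mul h l))
    (f : H →ₗ[k] H) (c : H) (y : H ⊗[k] H) :
    lift D.mul (map f (D.mul.flip c) y) = D.mul (lift D.mul (map f LinearMap.id y)) c := by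
  induction y using TensorProduct.induction_on with
  | zero => simp
  | tmul a b => simp [massoc]
  | add u v hu hv => simp only [map_add, LinearMap.add_apply, hu, hv]

lemma lift_mul_map_comul_eq_counit_smul_one (S : H →ₗ[k] H)
    (hS : ∀ h, map (lift D.mul ∘ₗ map S LinearMap.id) LinearMap.id
        ((TensorProduct.assoc k H H H).symm (map LinearMap.id D.comul (D.comul h))) =
      D.one ⊗ₜ h)
    (h : H) :
    lift D.mul (map S LinearMap.id (D.comul h)) = D.counit h • D.one := by
  have contract : ∀ x : H ⊗[k] H,
      TensorProduct.rid k H (map LinearMap.id D.counit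
        (map (lift D.mul ∘ₗ map S LinearMap.id) LinearMap.id
          ((TensorProduct.assoc k H H H).symm (map LinearMap.id D.comul x)))) =
      lift D.mul (map S LinearMap.id x) := by
    intro x
    induction x using TensorProduct.induction_on with
    | zero => simp
    | tmul a b =>
      rw [map_tmul, map_lift_mul_assoc_symm_tmul, LinearMap.comp_id, rid_map_counit_map,
        comul_counit]
      simp
    | add u v hu hv => simp only [map_add, hu, hv]
  simpa [contract] using
    congrArg (fun x => TensorProduct.rid k H (map LinearMap.id D.counit x)) (hS h)

/-- `S h = (S h₍₁₎₍₁₎)(h₍₁₎₍₂₎ S' h₍₂₎) = ((S h₍₁₎₍₁₎) h₍₁₎₍₂₎) S' h₍₂₎ = S' h`. -/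
lemma eq_of_lift_mul_map_comul_eq_counit_smul_one
    (massoc : ∀ g h l, D.mul (D.mul g h) l = D.mul g (D.mul h l)) (S S' : H →ₗ[k] H)
    (hS : ∀ h, lift D.mul (map S LinearMap.id (D.comul h)) = D.counit h • D.one)
    (hS' : ∀ h, map LinearMap.id (lift D.mul ∘ₗ map LinearMap.id S')
        (TensorProduct.assoc k H H H (map D.comul LinearMap.id (D.comul h))) = h ⊗ₜ D.one) :
    S' = S := by
  have contract : ∀ x : H ⊗[k] H,
      lift D.mul (map S LinearMap.id (map LinearMap.id (lift D.mul ∘ₗ map LinearMap.id S')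
        (TensorProduct.assoc k H H H (map D.comul LinearMap.id x)))) =
      S' (TensorProduct.lid k H (map D.counit LinearMap.id x)) := by
    intro x
    induction x using TensorProduct.induction_on with
    | zero => simp
    | tmul a b =>
      rw [map_tmul, map_lift_mul_assoc_tmul, LinearMap.comp_id, map_map, LinearMap.comp_id,
        LinearMap.id_comp, LinearMap.id_apply,
        lift_mul_map_mul_flip D massoc, hS]
      simp [D.one_mul]
    | add u v hu hv => simp only [map_add, hu, hv]
  ext h
  simpa [contract, counit_comul, D.mul_one] using
    congrArg (fun x => lift D.mul (map S LinearMap.id x)) (hS' h)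

lemma coantipode₁_antipodeOf {φ : H ⊗[k] H →ₗ[k] H ⊗[k] H}
    (hr : D.rGalois ∘ₗ φ = LinearMap.id) (hφ : D.AlmostRightColinear φ) (h : H) :
    map (lift D.mul ∘ₗ map (D.antipodeOf φ) LinearMap.id) LinearMap.id
        ((TensorProduct.assoc k H H H).symm (map LinearMap.id D.comul (D.comul h))) =
      D.one ⊗ₜ h := by
  rw [← rGalois_map, ← D.apply_one_tmul_of_almostRightColinear hφ, ← LinearMap.comp_apply, hr,
    LinearMap.id_apply]

lemma coantipode₂_antipodeOf (massoc : ∀ g h l, D.mul (D.mul g h) l = D.mul g (D.mul h l))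
    {φ : H ⊗[k] H →ₗ[k] H ⊗[k] H} (hl : φ ∘ₗ D.rGalois = LinearMap.id)
    (hr : D.rGalois ∘ₗ φ = LinearMap.id) (hφ : D.AlmostRightColinear φ) (h : H) :
    map (lift D.mul ∘ₗ map LinearMap.id (D.antipodeOf φ)) LinearMap.id
        ((TensorProduct.assoc k H H H).symm (map LinearMap.id D.comul (D.comul h))) =
      D.one ⊗ₜ h := by
  have hinv := LinearMap.congr_fun hl (D.one ⊗ₜ h)
  rw [LinearMap.comp_apply, rGalois_one_tmul, D.eq_betaInvOf_antipodeOf massoc hl hr hφ] at hinv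
  exact hinv

lemma coantipode₃_lAntipodeOf {φ : H ⊗[k] H →ₗ[k] H ⊗[k] H}
    (hr : D.lGalois ∘ₗ φ = LinearMap.id) (hφ : D.AlmostLeftColinear φ) (h : H) :
    map LinearMap.id (lift D.mul ∘ₗ map LinearMap.id (D.lAntipodeOf φ))
        (TensorProduct.assoc k H H H (map D.comul LinearMap.id (D.comul h))) =
      h ⊗ₜ D.one := by
  rw [← lGalois_map, ← D.apply_tmul_one_of_almostLeftColinear hφ, ← LinearMap.comp_apply, hr,
    LinearMap.id_apply]

lemma coantipode₄_lAntipodeOf (massoc : ∀ g h l, D.mul (D.mul g h) l = D.mul g (D.mul h l))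
    {φ : H ⊗[k] H →ₗ[k] H ⊗[k] H} (hl : φ ∘ₗ D.lGalois = LinearMap.id)
    (hr : D.lGalois ∘ₗ φ = LinearMap.id) (hφ : D.AlmostLeftColinear φ) (h : H) :
    map LinearMap.id (lift D.mul ∘ₗ map (D.lAntipodeOf φ) LinearMap.id)
        (TensorProduct.assoc k H H H (map D.comul LinearMap.id (D.comul h))) =
      h ⊗ₜ D.one := by
  have hinv := LinearMap.congr_fun hl (h ⊗ₜ D.one)
  rw [LinearMap.comp_apply, lGalois_tmul_one, D.eq_gammaInvOf_lAntipodeOf massoc hl hr hφ]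
    at hinv
  exact hinv

end BialgQ

/-- If the multiplication is associative and the right (resp. left) Galois map
has an almost right (resp. left) `H`-colinear inverse, then `H` is a Hopf coquasigroup: the
map `S h = (id ⊗ ε)(β⁻¹(1 ⊗ h))` satisfies
`(S h₍₁₎) h₍₂₎₍₁₎ ⊗ h₍₂₎₍₂₎ = 1 ⊗ h = h₍₁₎ S(h₍₂₎₍₁₎) ⊗ h₍₂₎₍₂₎` and
`h₍₁₎₍₁₎ ⊗ h₍₁₎₍₂₎ S h₍₂₎ = h ⊗ 1 = h₍₁₎₍₁₎ ⊗ (S h₍₁₎₍₂₎) h₍₂₎`. -/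
theorem stmt7 {k : Type*} [Field k] {H : Type*} [AddCommGroup H] [Module k H]
    (D : BialgQ k H)
    (massoc : ∀ g h l, D.mul (D.mul g h) l = D.mul g (D.mul h l))
    (βinv : H ⊗[k] H →ₗ[k] H ⊗[k] H)
    (hβl : βinv.comp D.rGalois = LinearMap.id)
    (hβr : D.rGalois.comp βinv = LinearMap.id)
    (hβ : D.AlmostRightColinear βinv)
    (γinv : H ⊗[k] H →ₗ[k] H ⊗[k] H)
    (hγl : γinv.comp D.lGalois = LinearMap.id)
    (hγr : D.lGalois.comp γinv = LinearMap.id)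
    (hγ : D.AlmostLeftColinear γinv) :
    (∀ h : H,
      TensorProduct.map
        ((TensorProduct.lift D.mul).comp (TensorProduct.map (D.antipodeOf βinv) LinearMap.id))
        LinearMap.id
        ((TensorProduct.assoc k H H H).symm
          (TensorProduct.map LinearMap.id D.comul (D.comul h))) = D.one ⊗ₜ[k] h) ∧
    (∀ h : H,
      TensorProduct.map
        ((TensorProduct.lift D.mul).comp (TensorProduct.map LinearMap.id (D.antipodeOf βinv)))
        LinearMap.id
        ((TensorProduct.assoc k H H H).symm
          (TensorProduct.map LinearMap.id D.comul (D.comul h))) = D.one ⊗ₜ[k] h) ∧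
    (∀ h : H,
      TensorProduct.map LinearMap.id
        ((TensorProduct.lift D.mul).comp (TensorProduct.map LinearMap.id (D.antipodeOf βinv)))
        (TensorProduct.assoc k H H H
          (TensorProduct.map D.comul LinearMap.id (D.comul h))) = h ⊗ₜ[k] D.one) ∧
    (∀ h : H,
      TensorProduct.map LinearMap.id
        ((TensorProduct.lift D.mul).comp (TensorProduct.map (D.antipodeOf βinv) LinearMap.id))
        (TensorProduct.assoc k H H H
          (TensorProduct.map D.comul LinearMap.id (D.comul h))) = h ⊗ₜ[k] D.one) := by
  have coantipode₃ := D.coantipode₃_lAntipodeOf hγr hγ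
  have hS : D.lAntipodeOf γinv = D.antipodeOf βinv :=
    D.eq_of_lift_mul_map_comul_eq_counit_smul_one massoc _ _
      (D.lift_mul_map_comul_eq_counit_smul_one _ (D.coantipode₁_antipodeOf hβr hβ)) coantipode₃
  refine ⟨D.coantipode₁_antipodeOf hβr hβ, D.coantipode₂_antipodeOf massoc hβl hβr hβ, ?_, ?_⟩
  · rwa [← hS]
  · rw [← hS]
    exact D.coantipode₄_lAntipodeOf massoc hγl hγr hγ
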